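/- Let n ≥ d and ω = (1,1,…,1,0,…,0) ∈ Λ(n,d) with d ones. The ω-weight space 1_ω · V^{⊗d} of V^{⊗d} (V = ℚ^n) has dimension d!, and the map Σ_d → End(1_ω V^{⊗d}) given by the place-permutation action is injective; consequently 1_ω End_{Σ_d}(V^{⊗d}) 1_ω ≅ ℚ[Σ_d] as ℚ-algebras. -/

import Mathlib

open scoped BigOperators

/-- `V^{⊗d}` for `V = ℚ^n`, modeled as functions on the basis of pure tensors. -/
abbrev TP (n d : ℕ) : Type := (Fin d → Fin n) → ℚ

/-- The operator on `V^{⊗d}` induced (via the derivation action) by the matrix unit `E i j`. -/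
noncomputable def EU (n d : ℕ) (i j : Fin n) : Module.End ℚ (TP n d) where
  toFun f := fun w => ∑ p : Fin d, if w p = i then f (Function.update w p j) else 0
  map_add' f g := by
    funext w
    simp only [Pi.add_apply]
    rw [← Finset.sum_add_distrib]
    refine Finset.sum_congr rfl fun p _ => ?_
    split <;> simp
  map_smul' c f := by
    funext w
    simp only [Pi.smul_apply, smul_eq_mul, RingHom.id_apply, Finset.mul_sum]
    refine Finset.sum_congr rfl fun p _ => ?_
    split <;> simp

/-- The place-permutation operator on `V^{⊗d}`. -/
def permOp (n d : ℕ) (σ : Equiv.Perm (Fin d)) : Module.End ℚ (TP n d) where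
  toFun f := fun w => f (w ∘ σ)
  map_add' _ _ := rfl
  map_smul' _ _ := rfl

/-- content (weight) of a basis tensor -/
def content (n d : ℕ) (w : Fin d → Fin n) : Fin n → ℕ :=
  fun k => (Finset.univ.filter (fun p => w p = k)).card

/-- projection onto the span of basis tensors of content `μ` -/
noncomputable def proj (n d : ℕ) (μ : Fin n → ℕ) : Module.End ℚ (TP n d) where
  toFun f := fun w => if content n d w = μ then f w else 0
  map_add' f g := by funext w; by_cases h : content n d w = μ <;> simp [h]
  map_smul' c f := by funext w; by_cases h : content n d w = μ <;> simp [h]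

/-- the set `Λ(n,d)` of `n`-part compositions of `d`, as a finset of `ℕ^n` -/
def Lam (n d : ℕ) : Finset (Fin n → ℕ) :=
  ((Finset.univ : Finset (Fin n → Fin (d+1))).image (fun μ k => (μ k : ℕ))).filter
    (fun lam => ∑ k, lam k = d)

/-- `binom(A, m) = A(A-1)⋯(A-m+1)/m!` for an operator `A` -/
noncomputable def binomOp {M : Type*} [AddCommGroup M] [Module ℚ M]
    (A : Module.End ℚ M) (m : ℕ) : Module.End ℚ M :=
  (m.factorial : ℚ)⁻¹ • Polynomial.aeval A (descPochhammer ℚ m)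

/-- divided power `A^{(m)} = A^m/m!` -/
noncomputable def dpow {M : Type*} [AddCommGroup M] [Module ℚ M]
    (A : Module.End ℚ M) (m : ℕ) : Module.End ℚ M :=
  (m.factorial : ℚ)⁻¹ • A ^ m

/-- the weight `ω = (1,…,1,0,…,0)` with `d` ones -/
def omegaWt (n d : ℕ) : Fin n → ℕ := fun k => if (k : ℕ) < d then 1 else 0


namespace CornerAux

open Equiv Finset

variable {n d : ℕ}

@[simp] lemma proj_apply (n d : ℕ) (μ : Fin n → ℕ) (f : TP n d) (w : Fin d → Fin n) :
    proj n d μ f w = if content n d w = μ then f w else 0 := rfl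

@[simp] lemma permOp_apply (n d : ℕ) (σ : Equiv.Perm (Fin d)) (f : TP n d) (w : Fin d → Fin n) :
    permOp n d σ f w = f (w ∘ σ) := rfl

lemma content_comp_perm (π : Equiv.Perm (Fin n)) (w : Fin d → Fin n) (k : Fin n) :
    content n d (⇑π ∘ w) k = content n d w (π.symm k) := by
  unfold content
  congr 1
  apply Finset.filter_congr
  intro p _
  simp [Function.comp, Equiv.apply_eq_iff_eq_symm_apply]

/-- extension of a permutation of `Fin d` to `Fin n` -/
noncomputable def eV (hnd : d ≤ n) : Equiv.Perm (Fin d) →* Equiv.Perm (Fin n) :=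
  Equiv.Perm.viaEmbeddingHom (Fin.castLEEmb hnd)

lemma eV_castLE (hnd : d ≤ n) (σ : Equiv.Perm (Fin d)) (p : Fin d) :
    eV hnd σ (Fin.castLE hnd p) = Fin.castLE hnd (σ p) := by
  have := Equiv.Perm.viaEmbedding_apply σ (Fin.castLEEmb hnd) p
  simpa [eV, Equiv.Perm.viaEmbeddingHom_apply] using this

lemma eV_lt (hnd : d ≤ n) (σ : Equiv.Perm (Fin d)) (x : Fin n) :
    ((eV hnd σ x : Fin n) : ℕ) < d ↔ (x : ℕ) < d := by
  by_cases hx : (x : ℕ) < d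
  · have hxe : x = Fin.castLE hnd ⟨(x : ℕ), hx⟩ := by ext; rfl
    rw [hxe, eV_castLE]
    simpa [hx] using (σ ⟨(x : ℕ), hx⟩).isLt
  · have hx' : x ∉ Set.range (Fin.castLEEmb hnd) := by
      rintro ⟨p, rfl⟩
      exact hx p.isLt
    have : eV hnd σ x = x := by
      show (Equiv.Perm.viaEmbeddingHom (Fin.castLEEmb hnd) σ) x = x
      rw [Equiv.Perm.viaEmbeddingHom_apply]
      exact Equiv.Perm.viaEmbedding_apply_of_notMem σ _ x hx'
    rw [this]

lemma omega_eV (hnd : d ≤ n) (σ : Equiv.Perm (Fin d)) (k : Fin n) :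
    omegaWt n d (eV hnd σ k) = omegaWt n d k := by
  simp only [omegaWt, eV_lt]

lemma content_eV (hnd : d ≤ n) (σ : Equiv.Perm (Fin d)) (w : Fin d → Fin n) :
    content n d (⇑(eV hnd σ) ∘ w) = omegaWt n d ↔ content n d w = omegaWt n d := by
  constructor
  · intro h
    funext k
    have h1 : content n d (⇑(eV hnd σ) ∘ w) (eV hnd σ k) = content n d w k := by
      rw [content_comp_perm]
      simp
    rw [← h1, h, omega_eV]
  · intro h
    funext k
    rw [content_comp_perm, h]
    have : (eV hnd σ).symm k = eV hnd σ⁻¹ k := by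
      rw [← Equiv.Perm.inv_def, ← map_inv]
    rw [this, omega_eV]

lemma content_iff (hnd : d ≤ n) (w : Fin d → Fin n) :
    content n d w = omegaWt n d ↔ Function.Injective w ∧ ∀ p, ((w p : Fin n) : ℕ) < d := by
  constructor
  · intro h
    have hlt : ∀ p, ((w p : Fin n) : ℕ) < d := by
      intro p
      by_contra hge
      have h0 : content n d w (w p) = 0 := by
        rw [h]; simp [omegaWt, hge]
      have hp : p ∈ Finset.univ.filter (fun q => w q = w p) := by simp
      rw [content, Finset.card_eq_zero] at h0
      rw [h0] at hp
      exact absurd hp (Finset.notMem_empty p)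
    refine ⟨?_, hlt⟩
    intro p q hpq
    by_contra hne
    have h1 : content n d w (w p) = 1 := by
      rw [h]; simp [omegaWt, hlt p]
    have hsub : ({p, q} : Finset (Fin d)) ⊆ Finset.univ.filter (fun r => w r = w p) := by
      intro r hr
      simp only [Finset.mem_insert, Finset.mem_singleton] at hr
      rcases hr with rfl | rfl <;> simp [hpq]
    have h2 : ({p, q} : Finset (Fin d)).card = 2 := Finset.card_pair hne
    have := Finset.card_le_card hsub
    rw [h2, content] at *
    omega
  · rintro ⟨hinj, hlt⟩
    funext k
    by_cases hk : (k : ℕ) < d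
    · have hsurj : Function.Surjective (fun p => (⟨(w p : ℕ), hlt p⟩ : Fin d)) := by
        apply Finite.injective_iff_surjective.mp
        intro p q hpq
        apply hinj
        simp only [Fin.mk.injEq] at hpq
        exact Fin.val_injective hpq
      obtain ⟨p, hp⟩ := hsurj ⟨(k : ℕ), hk⟩
      have hwp : w p = k := by
        simp only [Fin.mk.injEq] at hp
        exact Fin.val_injective hp
      have : Finset.univ.filter (fun q => w q = k) = {p} := by
        ext q
        simp only [Finset.mem_filter, Finset.mem_univ, true_and, Finset.mem_singleton]
        constructor
        · intro hq; exact hinj (hq.trans hwp.symm)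
        · rintro rfl; exact hwp
      rw [content, this]
      simp [omegaWt, hk]
    · have : Finset.univ.filter (fun q => w q = k) = ∅ := by
        rw [Finset.filter_eq_empty_iff]
        intro q _ hq
        exact hk (hq ▸ hlt q)
      rw [content, this]
      simp [omegaWt, hk]

lemma content_castLE_comp (hnd : d ≤ n) (α : Equiv.Perm (Fin d)) :
    content n d (Fin.castLE hnd ∘ ⇑α) = omegaWt n d := by
  refine (content_iff hnd _).mpr ⟨?_, fun p => (α p).isLt⟩
  exact (Fin.castLE_injective hnd).comp α.injective

lemma content_castLE (hnd : d ≤ n) : content n d (Fin.castLE hnd) = omegaWt n d := by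
  have := content_castLE_comp hnd 1
  simpa using this

lemma castLE_comp_injective (hnd : d ≤ n) {α β : Equiv.Perm (Fin d)}
    (h : Fin.castLE hnd ∘ ⇑α = Fin.castLE hnd ∘ ⇑β) : α = β := by
  ext p
  have := congrFun h p
  exact congrArg Fin.val (Fin.castLE_injective hnd this)

lemma exists_perm (hnd : d ≤ n) {w : Fin d → Fin n} (h : content n d w = omegaWt n d) :
    ∃ α : Equiv.Perm (Fin d), w = Fin.castLE hnd ∘ ⇑α := by
  obtain ⟨hinj, hlt⟩ := (content_iff hnd w).mp h
  have hinj' : Function.Injective (fun p => (⟨(w p : ℕ), hlt p⟩ : Fin d)) := by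
    intro p q hpq
    apply hinj
    simp only [Fin.mk.injEq] at hpq
    exact Fin.val_injective hpq
  refine ⟨Equiv.ofBijective _ (Finite.injective_iff_bijective.mp hinj'), ?_⟩
  funext p
  show w p = Fin.castLE hnd _
  ext
  rfl

lemma card_T (hnd : d ≤ n) :
    Fintype.card {w : Fin d → Fin n // content n d w = omegaWt n d} = d.factorial := by
  classical
  have hb : Function.Bijective (fun α : Equiv.Perm (Fin d) =>
      (⟨Fin.castLE hnd ∘ ⇑α, content_castLE_comp hnd α⟩ :
        {w : Fin d → Fin n // content n d w = omegaWt n d})) := by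
    constructor
    · intro α β hab
      exact castLE_comp_injective hnd (congrArg Subtype.val hab)
    · rintro ⟨w, hw⟩
      obtain ⟨α, rfl⟩ := exists_perm hnd hw
      exact ⟨α, rfl⟩
  rw [← Fintype.card_of_bijective hb, Fintype.card_perm, Fintype.card_fin]

/-- extension-by-zero from the weight space -/
noncomputable def jmap (n d : ℕ) :
    ({w : Fin d → Fin n // content n d w = omegaWt n d} → ℚ) →ₗ[ℚ] TP n d where
  toFun g := fun w => if h : content n d w = omegaWt n d then g ⟨w, h⟩ else 0
  map_add' g h := by
    funext w
    by_cases hw : content n d w = omegaWt n d <;> simp [hw]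
  map_smul' c g := by
    funext w
    by_cases hw : content n d w = omegaWt n d <;> simp [hw]

lemma jmap_inj (n d : ℕ) : Function.Injective (jmap n d) := by
  intro g h heq
  funext t
  have := congrFun heq t.1
  simpa [jmap, t.2] using this

lemma range_jmap (n d : ℕ) :
    LinearMap.range (jmap n d) = LinearMap.range (proj n d (omegaWt n d)) := by
  ext f
  simp only [LinearMap.mem_range]
  constructor
  · rintro ⟨g, rfl⟩
    refine ⟨jmap n d g, ?_⟩
    funext w
    by_cases hw : content n d w = omegaWt n d <;> simp [jmap, hw]
  · rintro ⟨f, rfl⟩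
    refine ⟨fun t => f t.1, ?_⟩
    funext w
    by_cases hw : content n d w = omegaWt n d <;> simp [jmap, hw]

/-- value-permutation operators -/
noncomputable def vOp (hnd : d ≤ n) : Equiv.Perm (Fin d) →* Module.End ℚ (TP n d) where
  toFun σ :=
    { toFun := fun f => fun w => f (⇑(eV hnd σ)⁻¹ ∘ w)
      map_add' := fun _ _ => rfl
      map_smul' := fun _ _ => rfl }
  map_one' := by
    refine LinearMap.ext fun f => funext fun w => ?_
    simp
  map_mul' σ τ := by
    refine LinearMap.ext fun f => funext fun w => ?_
    show f (⇑(eV hnd (σ * τ))⁻¹ ∘ w) = f (⇑(eV hnd τ)⁻¹ ∘ (⇑(eV hnd σ)⁻¹ ∘ w))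
    congr 1
    funext p
    simp [map_mul, mul_inv_rev]

@[simp] lemma vOp_apply (hnd : d ≤ n) (σ : Equiv.Perm (Fin d)) (f : TP n d) (w : Fin d → Fin n) :
    vOp hnd σ f w = f (⇑(eV hnd σ)⁻¹ ∘ w) := rfl

lemma permOp_vOp_comm (hnd : d ≤ n) (σ τ : Equiv.Perm (Fin d)) :
    permOp n d τ * vOp hnd σ = vOp hnd σ * permOp n d τ :=
  LinearMap.ext fun _ => funext fun _ => rfl

lemma proj_vOp_comm (hnd : d ≤ n) (σ : Equiv.Perm (Fin d)) :
    proj n d (omegaWt n d) * vOp hnd σ = vOp hnd σ * proj n d (omegaWt n d) := by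
  refine LinearMap.ext fun f => funext fun w => ?_
  show (if content n d w = omegaWt n d then f (⇑(eV hnd σ)⁻¹ ∘ w) else 0)
      = (if content n d (⇑(eV hnd σ)⁻¹ ∘ w) = omegaWt n d then f (⇑(eV hnd σ)⁻¹ ∘ w) else 0)
  have hiff : content n d (⇑(eV hnd σ)⁻¹ ∘ w) = omegaWt n d ↔ content n d w = omegaWt n d := by
    have : ⇑(eV hnd σ)⁻¹ = ⇑(eV hnd σ⁻¹) := by rw [← map_inv]
    rw [this]
    exact content_eV hnd σ⁻¹ w
  by_cases h : content n d w = omegaWt n d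
  · rw [if_pos h, if_pos (hiff.mpr h)]
  · rw [if_neg h, if_neg (fun hc => h (hiff.mp hc))]

lemma proj_idem (n d : ℕ) (μ : Fin n → ℕ) : proj n d μ * proj n d μ = proj n d μ := by
  refine LinearMap.ext fun f => funext fun w => ?_
  by_cases h : content n d w = μ <;> simp [Module.End.mul_apply, h]

lemma permOp_single (τ : Equiv.Perm (Fin d)) (u : Fin d → Fin n) :
    permOp n d τ (Pi.single u (1:ℚ)) = Pi.single (u ∘ ⇑τ⁻¹) 1 := by
  funext w
  simp only [permOp_apply, Pi.single_apply]
  congr 1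
  rw [eq_iff_iff]
  constructor
  · rintro rfl
    funext p
    simp [Function.comp, Equiv.Perm.inv_def, Equiv.apply_symm_apply]
  · rintro rfl
    funext p
    simp [Function.comp, Equiv.Perm.inv_def, Equiv.symm_apply_apply]

lemma eVinv_comp (hnd : d ≤ n) (a α : Equiv.Perm (Fin d)) :
    ⇑(eV hnd a)⁻¹ ∘ (Fin.castLE hnd ∘ ⇑α) = Fin.castLE hnd ∘ ⇑(a⁻¹ * α) := by
  funext p
  have h1 : (eV hnd a)⁻¹ (Fin.castLE hnd (α p)) = Fin.castLE hnd (a⁻¹ (α p)) := by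
    have := eV_castLE hnd a⁻¹ (α p)
    rw [map_inv] at this
    exact this
  simpa [Function.comp, Equiv.Perm.mul_apply] using h1

lemma proj_expand (hnd : d ≤ n) (f : TP n d) :
    proj n d (omegaWt n d) f
      = ∑ β : Equiv.Perm (Fin d),
          f (Fin.castLE hnd ∘ ⇑β) • (Pi.single (Fin.castLE hnd ∘ ⇑β) (1:ℚ) : TP n d) := by
  classical
  funext u
  rw [Finset.sum_apply]
  simp only [Pi.smul_apply, Pi.single_apply, smul_eq_mul, proj_apply]
  by_cases h : content n d u = omegaWt n d
  · rw [if_pos h]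
    obtain ⟨γ, rfl⟩ := exists_perm hnd h
    rw [Finset.sum_eq_single γ]
    · simp
    · intro β _ hβ
      rw [if_neg, mul_zero]
      intro he
      exact hβ (castLE_comp_injective hnd he).symm
    · intro hγ
      exact absurd (Finset.mem_univ γ) hγ
  · rw [if_neg h]
    refine (Finset.sum_eq_zero fun β _ => ?_).symm
    rw [if_neg, mul_zero]
    intro he
    exact h (he ▸ content_castLE_comp hnd β)

lemma phi_eval (hnd : d ≤ n) (x : MonoidAlgebra ℚ (Equiv.Perm (Fin d))) (f : TP n d)
    (α : Equiv.Perm (Fin d)) :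
    (proj n d (omegaWt n d)
        * (MonoidAlgebra.lift ℚ (Module.End ℚ (TP n d)) (Equiv.Perm (Fin d)) (vOp hnd)) x
        * proj n d (omegaWt n d)) f (Fin.castLE hnd ∘ ⇑α)
      = ∑ a : Equiv.Perm (Fin d), x.coeff a * f (Fin.castLE hnd ∘ ⇑(a⁻¹ * α)) := by
  classical
  rw [Module.End.mul_apply, Module.End.mul_apply, proj_apply,
    if_pos (content_castLE_comp hnd α), MonoidAlgebra.lift_apply]
  rw [Finsupp.sum]
  simp only [LinearMap.coe_sum, Finset.sum_apply, LinearMap.smul_apply, Pi.smul_apply,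
    smul_eq_mul, vOp_apply]
  rw [Finset.sum_subset (Finset.subset_univ x.coeff.support)
    (fun a _ ha => by rw [Finsupp.notMem_support_iff.mp ha, zero_mul])]
  refine Finset.sum_congr rfl fun a _ => ?_
  rw [eVinv_comp hnd a α, proj_apply, if_pos (content_castLE_comp hnd _)]

lemma cent_entry (hnd : d ≤ n) {x : Module.End ℚ (TP n d)}
    (hx : x ∈ Subalgebra.centralizer ℚ (Set.range (permOp n d)))
    (β γ : Equiv.Perm (Fin d)) :
    x (Pi.single (Fin.castLE hnd ∘ ⇑β) (1:ℚ)) (Fin.castLE hnd ∘ ⇑γ)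
      = x (Pi.single (Fin.castLE hnd) (1:ℚ)) (Fin.castLE hnd ∘ ⇑(γ * β⁻¹)) := by
  classical
  have hc := (Subalgebra.mem_centralizer_iff ℚ).mp hx (permOp n d β⁻¹) ⟨β⁻¹, rfl⟩
  have h1 := congrFun (congrArg (fun A : Module.End ℚ (TP n d) =>
    A (Pi.single (Fin.castLE hnd) (1:ℚ))) hc) (Fin.castLE hnd ∘ ⇑γ)
  simp only [Module.End.mul_apply] at h1
  have h2 : permOp n d β⁻¹ (x (Pi.single (Fin.castLE hnd) (1:ℚ))) (Fin.castLE hnd ∘ ⇑γ)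
      = x (Pi.single (Fin.castLE hnd) (1:ℚ)) (Fin.castLE hnd ∘ ⇑(γ * β⁻¹)) := by
    rfl
  have h3 : permOp n d β⁻¹ (Pi.single (Fin.castLE hnd) (1:ℚ))
      = Pi.single (Fin.castLE hnd ∘ ⇑β) (1:ℚ) := by
    rw [permOp_single, inv_inv]
  rw [h2, h3] at h1
  exact h1.symm

end CornerAux

/-- For `n ≥ d`, the `ω`-weight space of `V^{⊗d}` has dimension `d!`, the place-permutation
action of `Σ_d` on it is faithful, and the corner algebra `1_ω End_{Σ_d}(V^{⊗d}) 1_ω` is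
isomorphic to the group algebra `ℚ[Σ_d]`. -/
theorem corner_is_group_algebra (n d : ℕ) (hnd : d ≤ n) :
    Module.finrank ℚ (LinearMap.range (proj n d (omegaWt n d))) = d.factorial ∧
    Function.Injective (fun σ : Equiv.Perm (Fin d) =>
        proj n d (omegaWt n d) * permOp n d σ * proj n d (omegaWt n d)) ∧
    ∃ φ : MonoidAlgebra ℚ (Equiv.Perm (Fin d)) →ₗ[ℚ] Module.End ℚ (TP n d),
      Function.Injective φ ∧ (∀ x y, φ (x * y) = φ x * φ y) ∧
      Set.range φ = {y | ∃ x ∈ Subalgebra.centralizer ℚ (Set.range (permOp n d)),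
          y = proj n d (omegaWt n d) * x * proj n d (omegaWt n d)} := by
  classical
  open CornerAux in
  refine ⟨?_, ?_, ?_⟩
  · -- dimension
    have e1 := LinearEquiv.ofInjective (jmap n d) (jmap_inj n d)
    have : Module.finrank ℚ (LinearMap.range (proj n d (omegaWt n d)))
        = Module.finrank ℚ ({w : Fin d → Fin n // content n d w = omegaWt n d} → ℚ) := by
      rw [← range_jmap n d]
      exact (e1.finrank_eq).symm
    rw [this, Module.finrank_pi, card_T hnd]
  · -- injectivity of the corner action
    intro σ τ h
    have h1 := congrFun (congrArg (fun A : Module.End ℚ (TP n d) =>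
      A (Pi.single (Fin.castLE hnd ∘ ⇑σ) (1:ℚ))) h) (Fin.castLE hnd)
    simp only [Module.End.mul_apply, proj_apply, permOp_apply] at h1
    rw [if_pos (content_castLE hnd), if_pos (content_castLE hnd),
      if_pos (content_castLE_comp hnd σ), if_pos (content_castLE_comp hnd τ)] at h1
    rw [Pi.single_apply, Pi.single_apply, if_pos rfl] at h1
    by_contra hne
    rw [if_neg (fun he => hne (castLE_comp_injective hnd he).symm)] at h1
    exact one_ne_zero h1
  · -- the corner algebra
    set P := proj n d (omegaWt n d) with hPdef
    set Φ := MonoidAlgebra.lift ℚ (Module.End ℚ (TP n d)) (Equiv.Perm (Fin d)) (vOp hnd)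
      with hΦdef
    have hPP : P * P = P := proj_idem n d (omegaWt n d)
    have hPΦ : ∀ z, P * Φ z = Φ z * P := by
      intro z
      rw [hΦdef, MonoidAlgebra.lift_apply, Finsupp.sum, Finset.mul_sum, Finset.sum_mul]
      refine Finset.sum_congr rfl fun a _ => ?_
      rw [mul_smul_comm, smul_mul_assoc, proj_vOp_comm hnd a]
    have hkey : ∀ z, P * Φ z * P = Φ z * P := by
      intro z
      rw [hPΦ z, mul_assoc, hPP]
    set φL : MonoidAlgebra ℚ (Equiv.Perm (Fin d)) →ₗ[ℚ] Module.End ℚ (TP n d) :=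
      { toFun := fun z => P * Φ z * P
        map_add' := fun z₁ z₂ => by simp only [map_add, add_mul, mul_add]
        map_smul' := fun c z => by
          simp only [map_smul, RingHom.id_apply, smul_mul_assoc, mul_smul_comm] } with hφL
    have hφL_apply : ∀ z, φL z = P * Φ z * P := fun _ => rfl
    have hzero : ∀ z, φL z = 0 → z = 0 := by
      intro z hz
      ext τ
      have h0 : φL z (Pi.single (Fin.castLE hnd ∘ ⇑τ⁻¹) (1:ℚ)) (Fin.castLE hnd) = 0 := by
        rw [hz]; rfl
      rw [hφL_apply] at h0
      have h1 := phi_eval hnd z (Pi.single (Fin.castLE hnd ∘ ⇑τ⁻¹) (1:ℚ)) 1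
      have hcomp : Fin.castLE hnd ∘ ⇑(1 : Equiv.Perm (Fin d)) = Fin.castLE hnd := by
        funext p; rfl
      rw [hcomp] at h1
      rw [h1] at h0
      have h2 : ∀ a : Equiv.Perm (Fin d),
          z.coeff a * (Pi.single (Fin.castLE hnd ∘ ⇑τ⁻¹) (1:ℚ) : TP n d) (Fin.castLE hnd ∘ ⇑(a⁻¹ * 1))
            = if a = τ then z.coeff a else 0 := by
        intro a
        rw [Pi.single_apply]
        by_cases ha : a = τ
        · subst ha
          simp [mul_one]
        · rw [if_neg ha, if_neg, mul_zero]
          intro he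
          apply ha
          have := castLE_comp_injective hnd he
          rw [mul_one] at this
          exact inv_injective this
      rw [Finset.sum_congr rfl (fun a _ => h2 a)] at h0
      rw [Finset.sum_ite_eq' Finset.univ τ z.coeff] at h0
      simpa using h0
    refine ⟨φL, ?_, ?_, ?_⟩
    · intro a b hab
      rw [← sub_eq_zero]
      apply hzero
      rw [map_sub, hab, sub_self]
    · intro x y
      rw [hφL_apply, hφL_apply, hφL_apply, hkey (x * y), hkey x, hkey y, map_mul]
      rw [mul_assoc (Φ x) P (Φ y * P), ← mul_assoc P (Φ y) P, hPΦ y, mul_assoc (Φ y) P P, hPP,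
        ← mul_assoc (Φ x) (Φ y) P]
    · ext y
      simp only [Set.mem_range, Set.mem_setOf_eq]
      constructor
      · rintro ⟨z, rfl⟩
        refine ⟨Φ z, ?_, rfl⟩
        rw [hΦdef, MonoidAlgebra.lift_apply, Finsupp.sum]
        apply Subalgebra.sum_mem
        intro a _
        apply Subalgebra.smul_mem
        rw [Subalgebra.mem_centralizer_iff]
        rintro g ⟨τ, rfl⟩
        exact permOp_vOp_comm hnd a τ
      · rintro ⟨x, hx, rfl⟩
        set c : Equiv.Perm (Fin d) → ℚ :=
          fun τ => x (Pi.single (Fin.castLE hnd) (1:ℚ)) (Fin.castLE hnd ∘ ⇑τ) with hc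
        set z : MonoidAlgebra ℚ (Equiv.Perm (Fin d)) :=
          MonoidAlgebra.ofCoeff (Finsupp.equivFunOnFinite.symm c) with hzdef
        have hz_apply : ∀ a, z.coeff a = c a := fun a => rfl
        refine ⟨z, ?_⟩
        refine LinearMap.ext fun f => funext fun w => ?_
        rw [hφL_apply]
        by_cases hw : content n d w = omegaWt n d
        · obtain ⟨α, rfl⟩ := exists_perm hnd hw
          rw [phi_eval hnd z f α]
          -- RHS: (P * x * P) f (ι∘α) = x (P f) (ι∘α)
          rw [Module.End.mul_apply, Module.End.mul_apply, proj_apply,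
            if_pos (content_castLE_comp hnd α)]
          rw [proj_expand hnd f, map_sum]
          rw [Finset.sum_apply]
          have hterm : ∀ β : Equiv.Perm (Fin d),
              (x (f (Fin.castLE hnd ∘ ⇑β) • (Pi.single (Fin.castLE hnd ∘ ⇑β) (1:ℚ) : TP n d)))
                (Fin.castLE hnd ∘ ⇑α)
              = c (α * β⁻¹) * f (Fin.castLE hnd ∘ ⇑β) := by
            intro β
            rw [map_smul, Pi.smul_apply, smul_eq_mul, cent_entry hnd hx β α, mul_comm]
          rw [Finset.sum_congr rfl (fun β _ => hterm β)]
          refine Fintype.sum_equiv ((Equiv.inv (Equiv.Perm (Fin d))).trans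
            (Equiv.mulRight α)) _ _ ?_
          intro a
          simp only [Equiv.trans_apply, Equiv.inv_apply, Equiv.coe_mulRight]
          rw [hz_apply]
          have : α * (a⁻¹ * α)⁻¹ = a := by group
          rw [this]
        · rw [Module.End.mul_apply, Module.End.mul_apply, proj_apply, if_neg hw,
            Module.End.mul_apply, Module.End.mul_apply, proj_apply, if_neg hw]
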